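/- Every shrewd cardinal is a strong limit cardinal: if κ is shrewd and μ < κ, then 2^μ < κ. -/

import Mathlib

universe u

open Cardinal

/-- Formulas of the language of set theory with an additional unary predicate
symbol `pred`; variables are indexed by natural numbers. -/
inductive SF : Type
  | mem : ℕ → ℕ → SF
  | eq : ℕ → ℕ → SF
  | pred : ℕ → SF
  | not : SF → SF
  | and : SF → SF → SF
  | ex : ℕ → SF → SF

/-- The free variables of a formula. -/
def SF.fv : SF → Set ℕ
  | .mem i j => {i, j}
  | .eq i j => {i, j}
  | .pred i => {i}
  | .not φ => φ.fv
  | .and φ ψ => φ.fv ∪ ψ.fv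
  | .ex k φ => φ.fv \ {k}

/-- Tarskian satisfaction of a formula in the structure whose carrier is the
class `S`, where the membership symbol is interpreted by the binary relation `E`
and the extra unary predicate symbol by the class `P`, under the valuation `v`. -/
def Sat (P : Set ZFSet.{u}) (E : ZFSet.{u} → ZFSet.{u} → Prop) (S : Set ZFSet.{u}) :
    SF → (ℕ → ZFSet.{u}) → Prop
  | .mem i j, v => E (v i) (v j)
  | .eq i j, v => v i = v j
  | .pred i, v => v i ∈ P
  | .not φ, v => ¬ Sat P E S φ v
  | .and φ ψ, v => Sat P E S φ v ∧ Sat P E S ψ v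
  | .ex k φ, v => ∃ x, x ∈ S ∧ Sat P E S φ (Function.update v k x)

/-- Satisfaction in the `∈`-structure with carrier `S`, the predicate symbol
being interpreted by the class `R`. -/
def SatIn (R : Set ZFSet.{u}) (S : Set ZFSet.{u}) (φ : SF) (v : ℕ → ZFSet.{u}) : Prop :=
  Sat R (· ∈ ·) S φ v

/-- Δ₀-formulas: built from atomic formulas by propositional connectives and
bounded existential quantification. -/
inductive IsDeltaZero : SF → Prop
  | mem (i j) : IsDeltaZero (.mem i j)
  | eq (i j) : IsDeltaZero (.eq i j)
  | pred (i) : IsDeltaZero (.pred i)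
  | not {φ} : IsDeltaZero φ → IsDeltaZero (.not φ)
  | and {φ ψ} : IsDeltaZero φ → IsDeltaZero ψ → IsDeltaZero (.and φ ψ)
  | bex {φ} (k j) : IsDeltaZero φ → IsDeltaZero (.ex k (.and (.mem k j) φ))

mutual
  /-- Σₙ-formulas of the Lévy hierarchy. -/
  inductive IsSigma : ℕ → SF → Prop
    | of_zero {φ} : IsDeltaZero φ → IsSigma 0 φ
    | of_pi {n φ} : IsPi n φ → IsSigma (n + 1) φ
    | ex {n φ} (k) : IsSigma (n + 1) φ → IsSigma (n + 1) (.ex k φ)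
  /-- Πₙ-formulas of the Lévy hierarchy. -/
  inductive IsPi : ℕ → SF → Prop
    | of_zero {φ} : IsDeltaZero φ → IsPi 0 φ
    | not {n φ} : IsSigma (n + 1) φ → IsPi (n + 1) (.not φ)
end

/-- The valuation sending `v₀` to `a`, `v₁` to `b` and all other variables to `∅`. -/
def val2 (a b : ZFSet.{u}) : ℕ → ZFSet.{u} := fun i => if i = 0 then a else if i = 1 then b else ∅

/-- `x` is a (von Neumann) ordinal. -/
def ZOrd (x : ZFSet.{u}) : Prop := x.IsTransitive ∧ ∀ y ∈ x, ZFSet.IsTransitive y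

/-- `κ` is a (von Neumann) cardinal. -/
def ZCard (κ : ZFSet.{u}) : Prop := ZOrd κ ∧ ∀ β ∈ κ, #β.toSet < #κ.toSet

/-- `κ` is an infinite cardinal. -/
def InfCard (κ : ZFSet.{u}) : Prop := ZCard κ ∧ ZFSet.omega ⊆ κ

/-- `κ` is an infinite regular cardinal: every cofinal subset of `κ` has
cardinality `κ`. -/
def ZRegular (κ : ZFSet.{u}) : Prop :=
  InfCard κ ∧ ∀ x : ZFSet.{u}, x ⊆ κ →
    (∀ β ∈ κ, ∃ γ ∈ x, β ∈ γ ∨ β = γ) → #x.toSet = #κ.toSet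

/-- `C` is a closed unbounded (class of) subset(s) of the ordinal `κ`. -/
def ZClub (C : Set ZFSet.{u}) (κ : ZFSet.{u}) : Prop :=
  (∀ γ ∈ C, γ ∈ κ) ∧ (∀ β ∈ κ, ∃ γ ∈ C, β ∈ γ) ∧
    (∀ β ∈ κ, (∃ γ, γ ∈ β) → (∀ γ ∈ β, ∃ δ ∈ C, γ ∈ δ ∧ δ ∈ β) → β ∈ C)

/-- `S` is stationary in `κ`: it meets every closed unbounded subset of `κ`. -/
def ZStationary (S : Set ZFSet.{u}) (κ : ZFSet.{u}) : Prop :=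
  ∀ C, ZClub C κ → ∃ γ ∈ C, γ ∈ S

/-- `H(θ)`: the class of all sets hereditarily of cardinality less than `θ`. -/
def HSet (θ : ZFSet.{u}) : Set ZFSet.{u} :=
  {x | ∃ t : ZFSet.{u}, t.IsTransitive ∧ x ⊆ t ∧ #t.toSet < #θ.toSet}

/-- `θ` is the cardinal successor `κ⁺` of `κ`. -/
def SuccCardOf (θ κ : ZFSet.{u}) : Prop :=
  ZCard θ ∧ κ ∈ θ ∧ ∀ μ, ZCard μ → κ ∈ μ → θ ⊆ μ

/-- `κ` is a weakly shrewd cardinal. -/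
def WeaklyShrewd (κ : ZFSet.{u}) : Prop :=
  InfCard κ ∧
    ∀ (φ : SF) (θ A : ZFSet.{u}), φ.fv ⊆ {0, 1} → ZCard θ → κ ∈ θ → A ⊆ κ →
      SatIn ∅ (HSet θ) φ (val2 A κ) →
      ∃ κ' θ' : ZFSet.{u}, ZCard κ' ∧ ZCard θ' ∧ κ' ∈ θ' ∧ κ' ∈ κ ∧
        SatIn ∅ (HSet θ') φ (val2 (A ∩ κ') κ')

/-- `j` is an elementary embedding of the `∈`-structure (with predicate `R`)
with carrier `X` into the one with carrier `Y`. -/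
def ElemEmbOn (R : Set ZFSet.{u}) (X Y : Set ZFSet.{u}) (j : ZFSet.{u} → ZFSet.{u}) : Prop :=
  (∀ x ∈ X, j x ∈ Y) ∧
    ∀ (φ : SF) (v : ℕ → ZFSet.{u}), (∀ i, v i ∈ X) →
      (SatIn R X φ v ↔ SatIn R Y φ (fun i => j (v i)))

/-- `X` is an elementary submodel of `Y` (as `∈`-structures with predicate `R`). -/
def ElemSub (R : Set ZFSet.{u}) (X Y : Set ZFSet.{u}) : Prop :=
  X ⊆ Y ∧ ∀ (φ : SF) (v : ℕ → ZFSet.{u}), (∀ i, v i ∈ X) → (SatIn R X φ v ↔ SatIn R Y φ v)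

/-- `X` is a Σₙ-elementary submodel of `Y`. -/
def SigmaElemSub (R : Set ZFSet.{u}) (n : ℕ) (X Y : Set ZFSet.{u}) : Prop :=
  X ⊆ Y ∧ ∀ (φ : SF), IsSigma n φ → ∀ (v : ℕ → ZFSet.{u}), (∀ i, v i ∈ X) →
    (SatIn R X φ v ↔ SatIn R Y φ v)

/-- The stages of the von Neumann hierarchy, as classes:
`Vclass o` consists of all sets of rank less than `o`. -/
def Vclass (o : Ordinal.{u}) : Set ZFSet.{u} := {x | ZFSet.rank x < o}

/-- The intersection `A ∩ V_c` (for `c` an ordinal). -/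
def Vres (A c : ZFSet.{u}) : ZFSet.{u} :=
  ZFSet.sep (fun y => ZFSet.rank y < ZFSet.rank c) A

/-- `κ` is a shrewd cardinal (Rathjen): for every formula `Φ(v₀,v₁)`, every
ordinal `α` and every `A ⊆ V_κ` such that `Φ(A,κ)` holds in `V_{κ+α}`, there
are ordinals `κ̄, ᾱ < κ` such that `Φ(A ∩ V_κ̄, κ̄)` holds in `V_{κ̄+ᾱ}`. -/
def Shrewd (κ : ZFSet.{u}) : Prop :=
  ZCard κ ∧
    ∀ (φ : SF) (α A : ZFSet.{u}), φ.fv ⊆ {0, 1} → ZOrd α →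
      (∀ y ∈ A, ZFSet.rank y < ZFSet.rank κ) →
      SatIn ∅ (Vclass (ZFSet.rank κ + ZFSet.rank α)) φ (val2 A κ) →
      ∃ κ' α' : ZFSet.{u}, κ' ∈ κ ∧ α' ∈ κ ∧
        SatIn ∅ (Vclass (ZFSet.rank κ' + ZFSet.rank α')) φ (val2 (Vres A κ') κ')


/-!
Suppose `μ ∈ κ` and `#κ ≤ 2 ^ #μ`, so that some `H` maps the subsets of `μ` onto `κ`. Let `A`
consist of the marker `{μ}` and the codes `{x, {μ, H x}}` for `x ⊆ μ`; the tag `μ ∈ {μ, H x}`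
keeps codes apart from the marker, since `μ ∉ x`. Shrewdness makes `rank κ` a limit, so
`A ⊆ V_κ`, and `V_κ` sees that `A` contains a singleton `{ξ}` such that every subset of `ξ` lies
in a tagged member of `A`. Reflecting this to `κ̄ < κ` forces `ξ = μ`, so every code lies in
`V_κ̄`; but the code of an `H`-preimage of `κ̄` has rank above that of `κ̄`.
-/

open ZFSet

theorem mem_Vres {A c y : ZFSet.{u}} : y ∈ Vres A c ↔ y ∈ A ∧ rank y < rank c :=
  mem_sep

theorem rank_pair_lt {L : Ordinal.{u}} (hL : ∀ o < L, Order.succ o < L) {a b : ZFSet.{u}}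
    (ha : rank a < L) (hb : rank b < L) : rank {a, b} < L := by
  rw [rank_pair]
  exact max_lt (hL _ ha) (hL _ hb)

theorem Shrewd.succ_lt_rank {κ : ZFSet.{u}} (h : Shrewd κ) {o : Ordinal.{u}} (ho : o < rank κ) :
    Order.succ o < rank κ := by
  by_contra hle
  obtain ⟨y, hyκ, hoy⟩ := lt_rank_iff.1 ho
  obtain ⟨κ', α', hκ', -, hsat⟩ := h.2 (.ex 2 (.mem 2 0)) ∅ {y}
    (by intro n; simp [SF.fv]; omega) ⟨isTransitive_empty, by simp⟩
    (by simpa using rank_lt_of_mem hyκ)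
    ⟨y, by simpa [Vclass] using rank_lt_of_mem hyκ, by simp [Sat, val2]⟩
  obtain ⟨z, -, hz⟩ := hsat
  replace hz : z ∈ Vres {y} κ' := hz
  obtain ⟨hzy, hzκ'⟩ := mem_Vres.1 hz
  rw [mem_singleton.1 hzy] at hzκ'
  have : rank κ' ≤ o := Order.lt_succ_iff.1 ((rank_lt_of_mem hκ').trans_le (not_lt.1 hle))
  exact (hzκ'.trans_le this).not_ge hoy

theorem exists_surjOn_powerset_of_card_le {κ μ : ZFSet.{u}} (hκ : κ.Nonempty)
    (hle : #κ.toSet ≤ 2 ^ #μ.toSet) :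
    ∃ H : ZFSet.{u} → ZFSet.{u}, (∀ x, H x ∈ κ) ∧ ∀ β ∈ κ, ∃ x ⊆ μ, H x = β := by
  have : #κ ≤ #μ.powerset := by
    rwa [Cardinal.mk_congr (powersetEquiv μ), Cardinal.mk_powerset]
  obtain ⟨e⟩ := this
  have : Nonempty κ := hκ.to_subtype
  let g : κ → ZFSet.{u} := fun β => (e β : ZFSet.{u})
  have hg : Function.Injective g := Subtype.val_injective.comp e.injective
  refine ⟨fun x => (Function.invFun g x).1, fun x => (Function.invFun g x).2, ?_⟩
  intro β hβ
  refine ⟨g ⟨β, hβ⟩, mem_powerset.1 (e ⟨β, hβ⟩).2, ?_⟩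
  simp only [Function.leftInverse_invFun hg ⟨β, hβ⟩]

section TagSet

variable (μ : ZFSet.{u}) (H : ZFSet.{u} → ZFSet.{u})

def tagCode (x : ZFSet.{u}) : ZFSet.{u} := {x, {μ, H x}}

noncomputable def tagSet : ZFSet.{u} :=
  insert {μ} (ZFSet.range fun x : μ.powerset => tagCode μ H x)

variable {μ H}

theorem mem_tagSet {p : ZFSet.{u}} : p ∈ tagSet μ H ↔ p = {μ} ∨ ∃ x ⊆ μ, p = tagCode μ H x := by
  simp [tagSet, eq_comm]

theorem eq_of_singleton_mem_tagSet {ξ : ZFSet.{u}} (h : {ξ} ∈ tagSet μ H) : ξ = μ := by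
  rcases mem_tagSet.1 h with h | ⟨x, hx, h⟩
  · exact singleton_inj.1 h
  · obtain ⟨rfl, hμ⟩ := pair_eq_singleton_iff.1 h.symm
    exact absurd (hx (hμ ▸ mem_pair.2 (Or.inl rfl))) (mem_irrefl μ)

theorem eq_tagCode_of_mem {x p z : ZFSet.{u}} (hx : x ⊆ μ) (hp : p ∈ tagSet μ H) (hxp : x ∈ p)
    (hzp : z ∈ p) (hμz : μ ∈ z) : p = tagCode μ H x := by
  rcases mem_tagSet.1 hp with rfl | ⟨x', -, rfl⟩
  · exact absurd (mem_singleton.1 hzp ▸ hμz) (mem_irrefl μ)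
  · rcases mem_pair.1 hxp with rfl | rfl
    · rfl
    · exact absurd (hx (mem_pair.2 (Or.inl rfl))) (mem_irrefl μ)

theorem rank_lt_rank_tagCode (x : ZFSet.{u}) : rank (H x) < rank (tagCode μ H x) :=
  (rank_lt_of_mem (mem_pair.2 (Or.inr rfl))).trans (rank_lt_of_mem (mem_pair.2 (Or.inr rfl)))

theorem rank_lt_of_mem_tagSet {L : Ordinal.{u}} (hL : ∀ o < L, Order.succ o < L)
    (hμ : rank μ < L) (hH : ∀ x, rank (H x) < L) {p : ZFSet.{u}} (hp : p ∈ tagSet μ H) :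
    rank p < L := by
  rcases mem_tagSet.1 hp with rfl | ⟨x, hx, rfl⟩
  · rw [rank_singleton]
    exact hL _ hμ
  · exact rank_pair_lt hL ((rank_mono hx).trans_lt hμ) (rank_pair_lt hL hμ (hH x))

end TagSet

def TagsSubsets (S : Set ZFSet.{u}) (A : ZFSet.{u}) : Prop :=
  ∃ ξ, {ξ} ∈ A ∧ ∀ x ∈ S, x ⊆ ξ → ∃ p ∈ A, x ∈ p ∧ ∃ z ∈ p, ξ ∈ z

/-- `TagsSubsets S A` as a formula in `v₀ = A`; the bound variables are `v₂ = {ξ}`, `v₃ = ξ`,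
`v₅ = x`, `v₆ = p`, `v₇ = z`, and `v₄` is auxiliary. -/
def tagsSubsetsFormula : SF :=
  .ex 2 (.and (.mem 2 0) (.ex 3 (.and (.mem 3 2) (.and
    (.not (.ex 4 (.and (.mem 4 2) (.not (.eq 4 3)))))
    (.not (.ex 5 (.and (.not (.ex 4 (.and (.mem 4 5) (.not (.mem 4 3)))))
      (.not (.ex 6 (.and (.mem 6 0) (.and (.mem 5 6) (.ex 7 (.and (.mem 7 6) (.mem 3 7))))))))))))))

theorem tagsSubsetsFormula_fv : tagsSubsetsFormula.fv ⊆ {0, 1} := by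
  intro n
  simp [tagsSubsetsFormula, SF.fv]
  omega

theorem satIn_tagsSubsetsFormula_iff {S : Set ZFSet.{u}} (hS : ∀ y ∈ S, ∀ z ∈ y, z ∈ S)
    {A b : ZFSet.{u}} (hA : ∀ y ∈ A, y ∈ S) :
    SatIn ∅ S tagsSubsetsFormula (val2 A b) ↔ TagsSubsets S A := by
  simp only [SatIn, Sat, tagsSubsetsFormula, Function.update_apply, val2, OfNat.zero_ne_ofNat,
    ↓reduceIte, Nat.reduceEqDiff, Nat.succ_ne_self, not_exists, not_and, not_not, not_forall]
  constructor
  · rintro ⟨m, -, hmA, ξ, -, hξm, hm, hall⟩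
    have hm : m = {ξ} := ext fun w =>
      ⟨fun hw => mem_singleton.2 (hm w (hS m (hA m hmA) w hw) hw),
        fun hw => mem_singleton.1 hw ▸ hξm⟩
    refine ⟨ξ, hm ▸ hmA, fun x hxS hxξ => ?_⟩
    obtain ⟨p, -, hpA, hxp, z, -, hzp, hξz⟩ := hall x hxS fun w _ hw => hxξ hw
    exact ⟨p, hpA, hxp, z, hzp, hξz⟩
  · rintro ⟨ξ, hξA, hall⟩
    have hξS : ξ ∈ S := hS _ (hA _ hξA) ξ (mem_singleton.2 rfl)
    refine ⟨{ξ}, hA _ hξA, hξA, ξ, hξS, mem_singleton.2 rfl, fun w _ hw => mem_singleton.1 hw,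
      fun x hxS hxξ => ?_⟩
    obtain ⟨p, hpA, hxp, z, hzp, hξz⟩ := hall x hxS fun w hw => hxξ w (hS x hxS w hw) hw
    exact ⟨p, hA p hpA, hpA, hxp, z, hS p (hA p hpA) z hzp, hzp, hξz⟩

theorem tagsSubsets_tagSet (S : Set ZFSet.{u}) (μ : ZFSet.{u}) (H : ZFSet.{u} → ZFSet.{u}) :
    TagsSubsets S (tagSet μ H) :=
  ⟨μ, mem_tagSet.2 (Or.inl rfl), fun x _ hx =>
    ⟨tagCode μ H x, mem_tagSet.2 (Or.inr ⟨x, hx, rfl⟩), mem_pair.2 (Or.inl rfl),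
      {μ, H x}, mem_pair.2 (Or.inr rfl), mem_pair.2 (Or.inl rfl)⟩⟩

theorem not_tagsSubsets_Vres_tagSet {μ x : ZFSet.{u}} {H : ZFSet.{u} → ZFSet.{u}} (hx : x ⊆ μ)
    {o : Ordinal.{u}} (ho : rank (H x) ≤ o) :
    ¬ TagsSubsets (Vclass o) (Vres (tagSet μ H) (H x)) := by
  rintro ⟨ξ, hξ, hall⟩
  obtain ⟨hξA, hξH⟩ := mem_Vres.1 hξ
  obtain rfl := eq_of_singleton_mem_tagSet hξA
  have hμH : rank ξ < rank (H x) := (rank_lt_of_mem (mem_singleton.2 rfl)).trans hξH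
  obtain ⟨p, hp, hxp, z, hzp, hξz⟩ := hall x ((rank_mono hx).trans_lt (hμH.trans_le ho)) hx
  obtain ⟨hpA, hpH⟩ := mem_Vres.1 hp
  rw [eq_tagCode_of_mem hx hpA hxp hzp hξz] at hpH
  exact (rank_lt_rank_tagCode x).not_gt hpH

/-- Every shrewd cardinal is a strong limit cardinal: if `κ` is shrewd and
`μ < κ`, then `2^μ < κ`. -/
theorem shrewd_strongLimit (κ : ZFSet.{u}) (h : Shrewd κ) :
    ∀ μ ∈ κ, (2 : Cardinal.{u + 1}) ^ #μ.toSet < #κ.toSet := by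
  intro μ hμ
  by_contra hle
  obtain ⟨H, hHκ, hHsurj⟩ := exists_surjOn_powerset_of_card_le ⟨μ, hμ⟩ (not_lt.1 hle)
  have hA : ∀ y ∈ tagSet μ H, rank y < rank κ := fun y =>
    rank_lt_of_mem_tagSet (fun _ => h.succ_lt_rank) (rank_lt_of_mem hμ)
      (fun x => rank_lt_of_mem (hHκ x))
  have hVtrans (o : Ordinal.{u}) : ∀ y ∈ Vclass o, ∀ z ∈ y, z ∈ Vclass o :=
    fun y hy z hz => (rank_lt_of_mem hz).trans hy
  obtain ⟨κ', α', hκ', -, hsat⟩ := h.2 tagsSubsetsFormula ∅ (tagSet μ H) tagsSubsetsFormula_fv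
    ⟨isTransitive_empty, by simp⟩ hA (by
      rw [rank_empty, add_zero, satIn_tagsSubsetsFormula_iff (hVtrans _) hA]
      exact tagsSubsets_tagSet _ μ H)
  obtain ⟨x, hx, rfl⟩ := hHsurj κ' hκ'
  rw [satIn_tagsSubsetsFormula_iff (hVtrans _)
    fun y hy => (mem_Vres.1 hy).2.trans_le le_self_add] at hsat
  exact not_tagsSubsets_Vres_tagSet hx le_self_add hsat
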